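/- Let φ, φ′ ∈ N′ and suppose x₁ ∈ φ ∩ φ′ satisfies f_φ(x₁) < f_{φ′}(x₁). Define recursively x_{i+1} = h_c(φ, x_i) if x_i ∈ φ and x_{i+1} = x_i otherwise, when i is odd; and x_{i+1} = h_c(φ′, x_i) if x_i ∈ φ′ and x_{i+1} = x_i otherwise, when i is even. Let i₀ = min{i ≥ 1 : x_i ∉ φ ∩ φ′}. Then the spatial positions of (x_i)_{1 ≤ i ≤ i₀} form an f_φ(x₁)-bounded anisotropic descending chain of pairwise distinct elements. Additionally, f_φ(x_i) < f_{φ′}(x_i) whenever i ∈ {1, …, i₀ − 1} is odd, and f_{φ′}(x_i) < f_φ(x_i) whenever i ∈ {1, …, i₀ − 1} is even. In particular, since φ and φ′ contain no infinite anisotropic descending chain, i₀ < ∞. -/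

import Mathlib

noncomputable section

namespace Lilypond

open scoped ENNReal

/-- Marked points: a spatial position in `ℝ² = ℝ × ℝ` (with the supremum norm)
together with a mark, which is a direction vector in `ℝ²`. -/
abbrev Pt : Type := (ℝ × ℝ) × (ℝ × ℝ)

def e1 : ℝ × ℝ := (1, 0)
def e2 : ℝ × ℝ := (0, 1)

/-- The mark space `M = {e₁, −e₁, e₂, −e₂}`. -/
def Mset : Set (ℝ × ℝ) := {e1, -e1, e2, -e2}

/-- The Euclidean norm on `ℝ²` (the norm of `ℝ × ℝ` itself is the sup-norm `|·|_∞`). -/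
def eNorm (p : ℝ × ℝ) : ℝ := Real.sqrt (p.1 ^ 2 + p.2 ^ 2)

/-- The eight forbidden directions `{±e₁, ±e₂, (±e₁ ± e₂)/√2}`. -/
def badDirs : Set (ℝ × ℝ) :=
  {e1, -e1, e2, -e2, (Real.sqrt 2)⁻¹ • (e1 + e2), (Real.sqrt 2)⁻¹ • (e1 - e2),
    (Real.sqrt 2)⁻¹ • (-e1 + e2), (Real.sqrt 2)⁻¹ • (-e1 - e2)}

/-- The set of spatial positions of a marked configuration. -/
def pos (φ : Set Pt) : Set (ℝ × ℝ) := Prod.fst '' φ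

/-- `A` contains an (infinite) anisotropic descending chain: there are `b > 0` and pairwise
distinct points `ξ₀, ξ₁, ξ₂, …` of `A` with `|ξ₀ − ξ₁|_∞ ≤ b` and
`|ξ_{i+1} − ξ_i|_∞ < |ξ_i − ξ_{i−1}|_∞` for all `i ≥ 1`. -/
def HasInfDescChain (A : Set (ℝ × ℝ)) : Prop :=
  ∃ b > (0 : ℝ), ∃ ξ : ℕ → ℝ × ℝ, Function.Injective ξ ∧ (∀ i, ξ i ∈ A) ∧
    ‖ξ 0 - ξ 1‖ ≤ b ∧ ∀ i, 1 ≤ i → ‖ξ (i + 1) - ξ i‖ < ‖ξ i - ξ (i - 1)‖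

/-- Local finiteness of a marked configuration. -/
def LocFin (φ : Set Pt) : Prop := ∀ r : ℝ, {x ∈ φ | ‖x.1‖ ≤ r}.Finite

/-- A marked set `φ ⊂ ℝ² × M` is admissible: it is locally finite, all marks lie in `M`,
its set of spatial positions contains no anisotropic descending chain, and
`(ξ − η)/|ξ − η| ∉ {±e₁, ±e₂, (±e₁ ± e₂)/√2}` (Euclidean normalization) for all distinct
`x = (ξ,v), y = (η,w) ∈ φ`. -/
def Admissible (φ : Set Pt) : Prop :=
  LocFin φ ∧ (∀ x ∈ φ, x.2 ∈ Mset) ∧ ¬ HasInfDescChain (pos φ) ∧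
    ∀ x ∈ φ, ∀ y ∈ φ, x ≠ y → (eNorm (x.1 - y.1))⁻¹ • (x.1 - y.1) ∉ badDirs

/-- The half-open growth segment `[ξ, ξ + l·v)`, interpreted as the full ray
`ξ + [0,∞)·v` when `l = ∞`. -/
def seg (ξ v : ℝ × ℝ) (l : ℝ≥0∞) : Set (ℝ × ℝ) :=
  {p | ∃ t : ℝ, 0 ≤ t ∧ ENNReal.ofReal t < l ∧ p = ξ + t • v}

/-- The tip `ξ + f(x)·v` of the (finite) segment grown from `x = (ξ, v)`. -/
def tip (f : Pt → ℝ≥0∞) (x : Pt) : ℝ × ℝ := x.1 + (f x).toReal • x.2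

/-- `y = (η, w)` is a stopping neighbor of `x = (ξ, v)` in `φ` (w.r.t. the growth
function `f`): `y ∈ φ`, `ξ + f(x)v ∈ [η, η + f(y)w)` and `|ξ + f(x)v − η| < f(x)`
(Euclidean norm). -/
def IsStopNbr (φ : Set Pt) (f : Pt → ℝ≥0∞) (x y : Pt) : Prop :=
  y ∈ φ ∧ tip f x ∈ seg y.1 y.2 (f y) ∧ eNorm (tip f x - y.1) < (f x).toReal

/-- `f` is a growth function for `φ`: the half-open segments `[ξ, ξ + f(x)v)` are pairwise
disjoint (hard-core property), every `x ∈ φ` with `f(x) < ∞` has a unique stopping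
neighbor, and (as a normalization identifying `f` with a function on `φ`) `f` vanishes
off `φ`. -/
def IsGrowthFn (φ : Set Pt) (f : Pt → ℝ≥0∞) : Prop :=
  (∀ x ∈ φ, ∀ y ∈ φ, x ≠ y → seg x.1 x.2 (f x) ∩ seg y.1 y.2 (f y) = ∅) ∧
  (∀ x ∈ φ, f x ≠ ⊤ → ∃! y, IsStopNbr φ f x y) ∧
  (∀ x, x ∉ φ → f x = 0)

open Classical in
/-- The growth function `f_φ` of a configuration (chosen by choice; it is unique on
admissible configurations). -/
def growthFn (φ : Set Pt) : Pt → ℝ≥0∞ :=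
  if h : ∃ f, IsGrowthFn φ f then h.choose else fun _ => 0

/-- `N′`: nonempty admissible configurations possessing a growth function which is
finite everywhere on the configuration. -/
def Nprime (φ : Set Pt) : Prop :=
  φ.Nonempty ∧ Admissible φ ∧ (∃ f, IsGrowthFn φ f) ∧ ∀ x ∈ φ, growthFn φ x ≠ ⊤

open Classical in
/-- The combinatorial descendant `h_c(φ, x)`: the (unique) stopping neighbor of `x`
in `φ`. -/
def hc (φ : Set Pt) (x : Pt) : Pt :=
  if h : ∃ y, IsStopNbr φ (growthFn φ) x y then h.choose else x

/-- The geometric descendant `h_g(φ, x) = ξ + f_φ(x)·v`. -/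
def hg (φ : Set Pt) (x : Pt) : ℝ × ℝ := tip (growthFn φ) x

/-- The closed segment `I(φ, x) = [ξ, h_g(φ, x)]`. -/
def I (φ : Set Pt) (x : Pt) : Set (ℝ × ℝ) := segment ℝ x.1 (hg φ x)

/-! The combinatorial descendant `y = (η, w) = h_c(φ, z)` of `z = (ξ, v)` is hit inside its
own segment: `h_g(φ, z) = η + t w` with `t < f_φ(z)`. Admissibility rules out `w = ±v`, so
`w ⊥ v` and `|η − ξ|_∞ = max (f_φ(z), t) = f_φ(z)`. If moreover `f_φ(z) < f_{φ′}(z)` and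
`y ∈ φ′`, then in `φ′` the longer segment of `z` covers `h_g(φ, z)`, so by the hard-core
property `y` stops before reaching it: `f_{φ′}(y) ≤ t < min (f_φ(z), f_φ(y))`. Along the
alternating sequence the roles of `φ` and `φ′` therefore swap at every step and the step
lengths `|x_{i+1} − x_i|_∞ = f(x_i)` strictly decrease; comparing them shows that no point
repeats. A chain that never leaves `φ ∩ φ′` would thus be an infinite anisotropic descending
chain in `φ`, contradicting admissibility. -/

lemma neg_mem_Mset {v : ℝ × ℝ} (hv : v ∈ Mset) : -v ∈ Mset := by
  simp only [Mset, Set.mem_insert_iff, Set.mem_singleton_iff] at hv ⊢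
  rcases hv with rfl | rfl | rfl | rfl <;> simp

lemma Mset_subset_badDirs : Mset ⊆ badDirs := by
  intro v hv
  simp only [Mset, Set.mem_insert_iff, Set.mem_singleton_iff] at hv
  rcases hv with rfl | rfl | rfl | rfl <;> simp [badDirs]

lemma eNorm_smul_of_mem_Mset {v : ℝ × ℝ} (hv : v ∈ Mset) (t : ℝ) : eNorm (t • v) = |t| := by
  simp only [Mset, Set.mem_insert_iff, Set.mem_singleton_iff] at hv
  rcases hv with rfl | rfl | rfl | rfl <;>
    simp [eNorm, e1, e2, Real.sqrt_sq_eq_abs]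

lemma Mset_eq_or_eq_neg_or_norm_eq_max {v w : ℝ × ℝ} (hv : v ∈ Mset) (hw : w ∈ Mset) :
    w = v ∨ w = -v ∨ ∀ a b : ℝ, ‖a • v + b • w‖ = max |a| |b| := by
  simp only [Mset, Set.mem_insert_iff, Set.mem_singleton_iff] at hv hw
  rcases hv with rfl | rfl | rfl | rfl <;> rcases hw with rfl | rfl | rfl | rfl <;>
    first
      | (left; rfl)
      | (right; left; simp; done)
      | (right; right; intro a b; simp [e1, e2, Prod.norm_def, max_comm])

lemma Admissible.sub_ne_smul {φ : Set Pt} (hφ : Admissible φ) {y z : Pt} (hy : y ∈ φ)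
    (hz : z ∈ φ) (hyz : y ≠ z) {v : ℝ × ℝ} (hv : v ∈ Mset) {c : ℝ} (hc : c ≠ 0) :
    y.1 - z.1 ≠ c • v := by
  intro h
  apply hφ.2.2.2 y hy z hz hyz
  rw [h, eNorm_smul_of_mem_Mset hv, smul_smul]
  rcases hc.lt_or_gt with hc | hc
  · rw [abs_of_neg hc, inv_neg, neg_mul, inv_mul_cancel₀ hc.ne, neg_one_smul]
    exact Mset_subset_badDirs (neg_mem_Mset hv)
  · rw [abs_of_pos hc, inv_mul_cancel₀ hc.ne', one_smul]
    exact Mset_subset_badDirs hv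

lemma injOn_of_lt_imp_ne {α β : Type*} [LinearOrder α] {f : α → β} {s : Set α}
    (h : ∀ i ∈ s, ∀ j ∈ s, i < j → f i ≠ f j) : Set.InjOn f s := by
  intro i hi j hj hij
  by_contra hne
  rcases lt_or_gt_of_ne hne with hlt | hlt
  exacts [h i hi j hj hlt hij, h j hj i hi hlt hij.symm]

lemma isGrowthFn_growthFn {φ : Set Pt} (h : ∃ f, IsGrowthFn φ f) :
    IsGrowthFn φ (growthFn φ) := by
  rw [growthFn, dif_pos h]
  exact h.choose_spec

namespace Nprime

variable {φ φ' : Set Pt} {z : Pt}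

lemma admissible (hφ : Nprime φ) : Admissible φ := hφ.2.1

lemma snd_mem_Mset (hφ : Nprime φ) (hz : z ∈ φ) : z.2 ∈ Mset := hφ.admissible.2.1 z hz

lemma isGrowthFn (hφ : Nprime φ) : IsGrowthFn φ (growthFn φ) := isGrowthFn_growthFn hφ.2.2.1

lemma growthFn_ne_top (hφ : Nprime φ) (hz : z ∈ φ) : growthFn φ z ≠ ⊤ := hφ.2.2.2 z hz

lemma isStopNbr_hc (hφ : Nprime φ) (hz : z ∈ φ) : IsStopNbr φ (growthFn φ) z (hc φ z) := by
  have h := (hφ.isGrowthFn.2.1 z hz (hφ.growthFn_ne_top hz)).exists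
  rw [hc, dif_pos h]
  exact h.choose_spec

lemma hc_mem (hφ : Nprime φ) (hz : z ∈ φ) : hc φ z ∈ φ := (hφ.isStopNbr_hc hz).1

lemma growthFn_pos (hφ : Nprime φ) (hz : z ∈ φ) : 0 < growthFn φ z := by
  have hlt := (hφ.isStopNbr_hc hz).2.2
  exact (ENNReal.toReal_pos_iff.mp ((Real.sqrt_nonneg _).trans_lt hlt)).1

lemma injOn_fst (hφ : Nprime φ) : Set.InjOn Prod.fst φ := by
  intro y hy z hz hyz
  by_contra hne
  have hstart : ∀ u ∈ φ, u.1 ∈ seg u.1 u.2 (growthFn φ u) :=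
    fun u hu => ⟨0, le_rfl, by simpa using hφ.growthFn_pos hu, by simp⟩
  have hzy : z.1 ∈ seg y.1 y.2 (growthFn φ y) := hyz ▸ hstart y hy
  exact (Set.eq_empty_iff_forall_notMem.mp (hφ.isGrowthFn.1 y hy z hz hne)) z.1
    ⟨hzy, hstart z hz⟩

lemma exists_hg_eq (hφ : Nprime φ) (hz : z ∈ φ) :
    ∃ t : ℝ, 0 ≤ t ∧ t < (growthFn φ z).toReal ∧
      ENNReal.ofReal t < growthFn φ (hc φ z) ∧ hg φ z = (hc φ z).1 + t • (hc φ z).2 := by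
  obtain ⟨hy, ⟨t, ht0, hty, htip⟩, hnear⟩ := hφ.isStopNbr_hc hz
  refine ⟨t, ht0, ?_, hty, htip⟩
  rwa [htip, add_sub_cancel_left, eNorm_smul_of_mem_Mset (hφ.snd_mem_Mset hy),
    abs_of_nonneg ht0] at hnear

lemma hc_ne (hφ : Nprime φ) (hz : z ∈ φ) : hc φ z ≠ z := by
  intro h
  have hnear := (hφ.isStopNbr_hc hz).2.2
  rw [h, tip, add_sub_cancel_left, eNorm_smul_of_mem_Mset (hφ.snd_mem_Mset hz),
    abs_of_nonneg ENNReal.toReal_nonneg] at hnear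
  exact hnear.false

lemma norm_hc_sub (hφ : Nprime φ) (hz : z ∈ φ) :
    ‖(hc φ z).1 - z.1‖ = (growthFn φ z).toReal := by
  obtain ⟨t, ht0, hts, -, htip⟩ := hφ.exists_hg_eq hz
  set y := hc φ z
  set s := (growthFn φ z).toReal
  have hy := hφ.hc_mem hz
  have hv := hφ.snd_mem_Mset hz
  have hdiff : y.1 - z.1 = s • z.2 + (-t) • y.2 := by
    rw [eq_sub_of_add_eq htip.symm, hg, tip]
    module
  have hnot : ∀ c : ℝ, c ≠ 0 → y.1 - z.1 ≠ c • z.2 :=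
    fun c hc => hφ.admissible.sub_ne_smul hy hz (hφ.hc_ne hz) hv hc
  rcases Mset_eq_or_eq_neg_or_norm_eq_max hv (hφ.snd_mem_Mset hy) with hw | hw | horth
  · exact absurd (by rw [hdiff, hw]; module) (hnot (s - t) (by linarith))
  · exact absurd (by rw [hdiff, hw]; module) (hnot (s + t) (by linarith))
  · rw [hdiff, horth, abs_neg, abs_of_nonneg ht0, abs_of_nonneg (ht0.trans hts.le),
      max_eq_left hts.le]

/-- In `φ′` the longer segment of `z` covers `h_g(φ, z)`, so the hard-core property stops the
segment of `h_c(φ, z)` before it gets there. -/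
lemma growthFn_hc_lt (hφ : Nprime φ) (hφ' : Nprime φ') (hz : z ∈ φ) (hz' : z ∈ φ')
    (hlt : growthFn φ z < growthFn φ' z) (hy' : hc φ z ∈ φ') :
    growthFn φ' (hc φ z) < growthFn φ (hc φ z) ∧ growthFn φ' (hc φ z) < growthFn φ z := by
  obtain ⟨t, ht0, hts, hty, htip⟩ := hφ.exists_hg_eq hz
  have hcover : hg φ z ∈ seg z.1 z.2 (growthFn φ' z) :=
    ⟨_, ENNReal.toReal_nonneg, by rwa [ENNReal.ofReal_toReal (hφ.growthFn_ne_top hz)], rfl⟩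
  have hle : growthFn φ' (hc φ z) ≤ ENNReal.ofReal t := by
    by_contra! hgt
    exact (Set.eq_empty_iff_forall_notMem.mp
      (hφ'.isGrowthFn.1 z hz' _ hy' (hφ.hc_ne hz).symm)) _ ⟨hcover, t, ht0, hgt, htip⟩
  refine ⟨hle.trans_lt hty, hle.trans_lt ?_⟩
  rwa [ENNReal.ofReal_lt_iff_lt_toReal ht0 (hφ.growthFn_ne_top hz)]

end Nprime

def alt (φ φ' : Set Pt) (i : ℕ) : Set Pt := if Odd i then φ else φ'

section Alternation

variable {φ φ' : Set Pt}

lemma alt_of_odd {i : ℕ} (hi : Odd i) : alt φ φ' i = φ := if_pos hi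

lemma alt_of_even {i : ℕ} (hi : Even i) : alt φ φ' i = φ' := if_neg (Nat.not_odd_iff_even.mpr hi)

lemma alt_add_two (i : ℕ) : alt φ φ' (i + 2) = alt φ φ' i := by
  simp [alt, Nat.odd_add]

lemma alt_eq_or_eq_alt_succ (i j : ℕ) :
    alt φ φ' j = alt φ φ' i ∨ alt φ φ' j = alt φ φ' (i + 1) := by
  simp only [alt, Nat.odd_add_one]
  by_cases hi : Odd i <;> by_cases hj : Odd j <;> simp [hi, hj]

lemma inter_subset_alt (i : ℕ) : φ ∩ φ' ⊆ alt φ φ' i := by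
  unfold alt
  split_ifs
  exacts [Set.inter_subset_left, Set.inter_subset_right]

lemma Nprime.alt (hφ : Nprime φ) (hφ' : Nprime φ') (i : ℕ) : Nprime (alt φ φ' i) := by
  unfold Lilypond.alt
  split_ifs
  exacts [hφ, hφ']

end Alternation

def IsAltDescendants (φ φ' : Set Pt) (x : ℕ → Pt) : Prop :=
  ∀ i, 1 ≤ i → x i ∈ alt φ φ' i → x (i + 1) = hc (alt φ φ' i) (x i)

namespace IsAltDescendants

variable {φ φ' : Set Pt} {x : ℕ → Pt} {n : ℕ}

lemma norm_sub_eq (hx : IsAltDescendants φ φ' x) (hφ : Nprime φ) (hφ' : Nprime φ') {i : ℕ}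
    (hi : 1 ≤ i) (hxi : x i ∈ alt φ φ' i) :
    ‖(x (i + 1)).1 - (x i).1‖ = (growthFn (alt φ φ' i) (x i)).toReal := by
  rw [hx i hi hxi]
  exact (hφ.alt hφ' i).norm_hc_sub hxi

lemma growthFn_lt (hx : IsAltDescendants φ φ' x) (hφ : Nprime φ) (hφ' : Nprime φ')
    (hlt : growthFn φ (x 1) < growthFn φ' (x 1)) (hS : Set.MapsTo x (Set.Ico 1 n) (φ ∩ φ'))
    {i : ℕ} (hi : i ∈ Set.Ico 1 n) :
    growthFn (alt φ φ' i) (x i) < growthFn (alt φ φ' (i + 1)) (x i) := by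
  obtain ⟨hi1, hin⟩ := hi
  induction i, hi1 using Nat.le_induction with
  | base => rwa [alt_of_odd odd_one, show 1 + 1 = 2 from rfl, alt_of_even even_two]
  | succ i hi ih =>
    have hxi := hS ⟨hi, by omega⟩
    have hy := inter_subset_alt (i + 1) (hS ⟨by omega, hin⟩)
    have hstep := hx i hi (inter_subset_alt i hxi)
    rw [hstep] at hy
    rw [show i + 1 + 1 = i + 2 from rfl, alt_add_two, hstep]
    exact ((hφ.alt hφ' i).growthFn_hc_lt (hφ.alt hφ' (i + 1)) (inter_subset_alt i hxi)
      (inter_subset_alt (i + 1) hxi) (ih (by omega)) hy).1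

lemma strictAntiOn (hx : IsAltDescendants φ φ' x) (hφ : Nprime φ) (hφ' : Nprime φ')
    (hlt : growthFn φ (x 1) < growthFn φ' (x 1)) (hS : Set.MapsTo x (Set.Ico 1 n) (φ ∩ φ')) :
    StrictAntiOn (fun i => ‖(x (i + 1)).1 - (x i).1‖) (Set.Ico 1 n) := by
  refine strictAntiOn_of_add_one_lt Set.ordConnected_Ico fun i _ hi hi1 => ?_
  have hxi := inter_subset_alt i (hS hi)
  have hy := inter_subset_alt (i + 1) (hS hi1)
  rw [hx.norm_sub_eq hφ hφ' hi.1 hxi, hx.norm_sub_eq hφ hφ' hi1.1 hy, hx i hi.1 hxi]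
  rw [hx i hi.1 hxi] at hy
  exact ENNReal.toReal_strict_mono ((hφ.alt hφ' i).growthFn_ne_top hxi)
    ((hφ.alt hφ' i).growthFn_hc_lt (hφ.alt hφ' (i + 1)) hxi (inter_subset_alt _ (hS hi))
      (hx.growthFn_lt hφ hφ' hlt hS hi) hy).2

/-- A repeated point `x_i = x_j` (`i < j`) would give the step from `x_j` the length either of
the step from `x_i` or of the longer segment of `x_i` in the other configuration. -/
lemma injOn (hx : IsAltDescendants φ φ' x) (hφ : Nprime φ) (hφ' : Nprime φ')
    (hlt : growthFn φ (x 1) < growthFn φ' (x 1)) (hS : Set.MapsTo x (Set.Ico 1 n) (φ ∩ φ')) :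
    Set.InjOn x (Set.Ico 1 n) := by
  refine injOn_of_lt_imp_ne fun i hi j hj hij hxij => ?_
  have hd : ‖(x (j + 1)).1 - (x j).1‖ < ‖(x (i + 1)).1 - (x i).1‖ :=
    hx.strictAntiOn hφ hφ' hlt hS hi hj hij
  rw [hx.norm_sub_eq hφ hφ' hj.1 (inter_subset_alt j (hS hj)),
    hx.norm_sub_eq hφ hφ' hi.1 (inter_subset_alt i (hS hi)), ← hxij] at hd
  rcases alt_eq_or_eq_alt_succ (φ := φ) (φ' := φ') i j with h | h <;> rw [h] at hd
  · exact hd.false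
  · exact (ENNReal.toReal_strict_mono
      ((hφ.alt hφ' (i + 1)).growthFn_ne_top (inter_subset_alt _ (hS hi)))
      (hx.growthFn_lt hφ hφ' hlt hS hi)).not_gt hd

lemma injOn_fst (hx : IsAltDescendants φ φ' x) (hφ : Nprime φ) (hφ' : Nprime φ')
    (hlt : growthFn φ (x 1) < growthFn φ' (x 1)) (hS : Set.MapsTo x (Set.Ico 1 n) (φ ∩ φ')) :
    Set.InjOn (fun i => (x i).1) (Set.Icc 1 n) := by
  refine injOn_of_lt_imp_ne ?_
  rintro i ⟨hi1, -⟩ j ⟨-, hjn⟩ hij hpos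
  obtain ⟨k, rfl⟩ : ∃ k, j = k + 1 := ⟨j - 1, by omega⟩
  have hxk := inter_subset_alt k (hS (x := k) ⟨by omega, by omega⟩)
  have hxj : x (k + 1) ∈ alt φ φ' k := hx k (by omega) hxk ▸ (hφ.alt hφ' k).hc_mem hxk
  have hxi := hS ⟨hi1, by omega⟩
  have heq : x i = x (k + 1) := (hφ.alt hφ' k).injOn_fst (inter_subset_alt k hxi) hxj hpos
  have hS' : Set.MapsTo x (Set.Ico 1 (k + 2)) (φ ∩ φ') := by
    rintro m ⟨hm1, hm2⟩
    rcases eq_or_ne m (k + 1) with rfl | hm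
    · exact heq ▸ hxi
    · exact hS ⟨hm1, by omega⟩
  exact absurd (hx.injOn hφ hφ' hlt hS' ⟨hi1, by omega⟩ ⟨by omega, by omega⟩ heq) (by omega)

lemma exists_notMem_inter (hx : IsAltDescendants φ φ' x) (hφ : Nprime φ) (hφ' : Nprime φ')
    (hlt : growthFn φ (x 1) < growthFn φ' (x 1)) : ∃ n, 1 ≤ n ∧ x n ∉ φ ∩ φ' := by
  by_contra! hall
  have hS : ∀ n, Set.MapsTo x (Set.Ico 1 n) (φ ∩ φ') := fun n i hi => hall i hi.1
  have hx1 := hall 1 le_rfl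
  have hno_chain : ¬ HasInfDescChain (pos φ) := hφ.admissible.2.2.1
  apply hno_chain
  refine ⟨(growthFn φ (x 1)).toReal,
    ENNReal.toReal_pos (hφ.growthFn_pos hx1.1).ne' (hφ.growthFn_ne_top hx1.1),
    fun i => (x (i + 1)).1, fun i j h => ?_, fun i => ⟨_, (hall (i + 1) (by omega)).1, rfl⟩,
    ?_, fun i hi => ?_⟩
  · have := hx.injOn_fst hφ hφ' hlt (hS (i + j + 1)) ⟨by omega, by omega⟩ ⟨by omega, by omega⟩ h
    omega
  · rw [norm_sub_rev, hx.norm_sub_eq hφ hφ' le_rfl (inter_subset_alt 1 hx1), alt_of_odd odd_one]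
  · obtain ⟨k, rfl⟩ : ∃ k, i = k + 1 := ⟨i - 1, by omega⟩
    exact hx.strictAntiOn hφ hφ' hlt (hS (k + 3)) ⟨by omega, by omega⟩ ⟨by omega, by omega⟩
      (by omega)

end IsAltDescendants

lemma exists_notMem_and_mapsTo_Ico {α : Type*} {f : ℕ → α} {s : Set α} {m : ℕ}
    (h : ∃ n, m ≤ n ∧ f n ∉ s) : ∃ n, m ≤ n ∧ f n ∉ s ∧ Set.MapsTo f (Set.Ico m n) s := by
  classical
  refine ⟨Nat.find h, (Nat.find_spec h).1, (Nat.find_spec h).2, fun j hj => ?_⟩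
  by_contra hjs
  exact Nat.find_min h hj.2 ⟨hj.1, hjs⟩

/-- Lemma on descending chains produced by comparing two
configurations.  Let `φ, φ′ ∈ N′` and `x₁ ∈ φ ∩ φ′` with `f_φ(x₁) < f_{φ′}(x₁)`.
Define recursively `x_{i+1} = h_c(φ, x_i)` if `x_i ∈ φ` and `x_{i+1} = x_i` otherwise,
for odd `i`, and `x_{i+1} = h_c(φ′, x_i)` if `x_i ∈ φ′` and `x_{i+1} = x_i` otherwise,
for even `i`.  Then there is a minimal index `i₀ ≥ 1` with `x_{i₀} ∉ φ ∩ φ′` (in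
particular `i₀ < ∞`), the spatial positions of `(x_i)_{1 ≤ i ≤ i₀}` are pairwise
distinct and form an `f_φ(x₁)`-bounded anisotropic descending chain, and
`f_φ(x_i) < f_{φ′}(x_i)` for odd `i ∈ {1, …, i₀ − 1}` while `f_{φ′}(x_i) < f_φ(x_i)`
for even `i ∈ {1, …, i₀ − 1}`. -/
theorem descending_chain_of_growth_difference (φ φ' : Set Pt)
    (hφ : Nprime φ) (hφ' : Nprime φ') (x : ℕ → Pt)
    (hx1 : x 1 ∈ φ ∩ φ') (hlt : growthFn φ (x 1) < growthFn φ' (x 1))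
    (hodd : ∀ i : ℕ, 1 ≤ i → Odd i →
      (x i ∈ φ → x (i + 1) = hc φ (x i)) ∧ (x i ∉ φ → x (i + 1) = x i))
    (heven : ∀ i : ℕ, 1 ≤ i → Even i →
      (x i ∈ φ' → x (i + 1) = hc φ' (x i)) ∧ (x i ∉ φ' → x (i + 1) = x i)) :
    ∃ i₀ : ℕ, 1 ≤ i₀ ∧ x i₀ ∉ φ ∩ φ' ∧ (∀ j, 1 ≤ j → j < i₀ → x j ∈ φ ∩ φ') ∧
      2 ≤ i₀ ∧
      -- the spatial positions of `(x_i)_{1 ≤ i ≤ i₀}` are pairwise distinct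
      (∀ i j, 1 ≤ i → i < j → j ≤ i₀ → (x i).1 ≠ (x j).1) ∧
      -- they form an `f_φ(x₁)`-bounded anisotropic descending chain
      ‖(x 1).1 - (x 2).1‖ ≤ (growthFn φ (x 1)).toReal ∧
      (∀ i, 2 ≤ i → i + 1 ≤ i₀ → ‖(x (i + 1)).1 - (x i).1‖ < ‖(x i).1 - (x (i - 1)).1‖) ∧
      -- parity of the growth comparisons along the chain
      (∀ i, 1 ≤ i → i < i₀ → Odd i → growthFn φ (x i) < growthFn φ' (x i)) ∧
      (∀ i, 1 ≤ i → i < i₀ → Even i → growthFn φ' (x i) < growthFn φ (x i)) := by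
  have hx : IsAltDescendants φ φ' x := by
    intro i hi hxi
    rcases Nat.even_or_odd i with he | ho
    · rw [alt_of_even he] at hxi ⊢
      exact (heven i hi he).1 hxi
    · rw [alt_of_odd ho] at hxi ⊢
      exact (hodd i hi ho).1 hxi
  obtain ⟨i₀, hi₀, hexit, hS⟩ :=
    exists_notMem_and_mapsTo_Ico (hx.exists_notMem_inter hφ hφ' hlt)
  have h2 : 2 ≤ i₀ := by
    by_contra h
    obtain rfl : i₀ = 1 := by omega
    exact hexit hx1
  have hgrowth := fun i hi hin => hx.growthFn_lt hφ hφ' hlt hS (i := i) ⟨hi, hin⟩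
  refine ⟨i₀, hi₀, hexit, fun j hj hji => hS ⟨hj, hji⟩, h2, ?_, ?_, ?_, ?_, ?_⟩
  · exact fun i j hi hij hj hpos =>
      hij.ne (hx.injOn_fst hφ hφ' hlt hS ⟨hi, by omega⟩ ⟨by omega, hj⟩ hpos)
  · rw [norm_sub_rev, hx.norm_sub_eq hφ hφ' le_rfl (inter_subset_alt 1 hx1), alt_of_odd odd_one]
  · intro i hi hi₀
    have hd : ‖(x (i + 1)).1 - (x i).1‖ < ‖(x (i - 1 + 1)).1 - (x (i - 1)).1‖ :=
      hx.strictAntiOn hφ hφ' hlt hS (a := i - 1) ⟨by omega, by omega⟩ ⟨by omega, by omega⟩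
        (by omega)
    rwa [Nat.sub_add_cancel (by omega : 1 ≤ i)] at hd
  · intro i hi hin ho
    simpa only [alt_of_odd ho, alt_of_even ho.add_one] using hgrowth i hi hin
  · intro i hi hin he
    simpa only [alt_of_even he, alt_of_odd he.add_one] using hgrowth i hi hin

end Lilypond
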